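/- In the braid group B_{2n} (n ≥ 3), with r_2 = σ_4 σ_3 σ_2 σ_1 σ_5^{-1} σ_4^{-1} σ_3^{-1} σ_2^{-1} and t_i = σ_{2i−1}, the relations r_2 t_2 r_2^{-1} = t_1 and r_2 t_3 r_2^{-1} = t_2 hold. -/
import Mathlib


/-- The braid relations on `m` generators `σ_1, …, σ_m` (indexed by `Fin m`):
`σᵢσⱼ = σⱼσᵢ` for `|i−j| > 1` and `σᵢσⱼσᵢ = σⱼσᵢσⱼ` for `|i−j| = 1`. -/
def braidRels (m : ℕ) : Set (FreeGroup (Fin m)) :=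
  { w | (∃ i j : Fin m, (i : ℕ) + 1 < (j : ℕ) ∧
          w = FreeGroup.of i * FreeGroup.of j * (FreeGroup.of i)⁻¹ * (FreeGroup.of j)⁻¹) ∨
        (∃ i j : Fin m, (i : ℕ) + 1 = (j : ℕ) ∧
          w = FreeGroup.of i * FreeGroup.of j * FreeGroup.of i *
              (FreeGroup.of j * FreeGroup.of i * FreeGroup.of j)⁻¹) }

/-- The braid group on `m + 1` strands, with generators `σ_1, …, σ_m`. -/
def BraidGroup (m : ℕ) : Type := PresentedGroup (braidRels m)

instance (m : ℕ) : Group (BraidGroup m) :=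
  inferInstanceAs (Group (PresentedGroup (braidRels m)))

/-- The standard Artin generator `σ_k` (for `1 ≤ k ≤ m`). -/
def bσ {m : ℕ} (k : ℕ) : BraidGroup m :=
  if h : k - 1 < m then PresentedGroup.of (⟨k - 1, h⟩ : Fin m) else 1

/-- `sᵢ = σ_{2i} σ_{2i−1} σ_{2i+1} σ_{2i}`. -/
def bs {m : ℕ} (i : ℕ) : BraidGroup m := bσ (2*i) * bσ (2*i - 1) * bσ (2*i + 1) * bσ (2*i)

/-- `tᵢ = σ_{2i−1}`. -/
def bt {m : ℕ} (i : ℕ) : BraidGroup m := bσ (2*i - 1)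

/-- `pᵢ = σ_{2i} σ_{2i−1} σ_{2i+1}⁻¹ σ_{2i}⁻¹`. -/
def bp {m : ℕ} (i : ℕ) : BraidGroup m := bσ (2*i) * bσ (2*i - 1) * (bσ (2*i + 1))⁻¹ * (bσ (2*i))⁻¹

/-- `r₁ = σ₂ σ₁ σ₃⁻¹ σ₂⁻¹`. -/
def br1 {m : ℕ} : BraidGroup m := bσ 2 * bσ 1 * (bσ 3)⁻¹ * (bσ 2)⁻¹

/-- `r₂ = σ₄ σ₃ σ₂ σ₁ σ₅⁻¹ σ₄⁻¹ σ₃⁻¹ σ₂⁻¹`. -/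
def br2 {m : ℕ} : BraidGroup m :=
  bσ 4 * bσ 3 * bσ 2 * bσ 1 * (bσ 5)⁻¹ * (bσ 4)⁻¹ * (bσ 3)⁻¹ * (bσ 2)⁻¹

lemma rel_eq_one {m : ℕ} {w : FreeGroup (Fin m)} (hw : w ∈ braidRels m) :
    (PresentedGroup.mk (braidRels m) w : BraidGroup m) = 1 := by
  have : w ∈ Subgroup.normalClosure (braidRels m) := Subgroup.subset_normalClosure hw
  exact (QuotientGroup.eq_one_iff w).mpr this

lemma braid_comm {m : ℕ} (i j : Fin m) (h : (i : ℕ) + 1 < (j : ℕ)) :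
    (PresentedGroup.of i : BraidGroup m) * PresentedGroup.of j
      = PresentedGroup.of j * PresentedGroup.of i := by
  have h1 := rel_eq_one (m := m) (Or.inl ⟨i, j, h, rfl⟩)
  simp only [map_mul, map_inv] at h1
  have h2 : (PresentedGroup.of i : BraidGroup m) * PresentedGroup.of j *
      (PresentedGroup.of i)⁻¹ * (PresentedGroup.of j)⁻¹ = 1 := h1
  calc (PresentedGroup.of i : BraidGroup m) * PresentedGroup.of j
      = ((PresentedGroup.of i : BraidGroup m) * PresentedGroup.of j *
          (PresentedGroup.of i)⁻¹ * (PresentedGroup.of j)⁻¹) *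
          (PresentedGroup.of j * PresentedGroup.of i) := by group
    _ = PresentedGroup.of j * PresentedGroup.of i := by rw [h2]; group

lemma braid_braid {m : ℕ} (i j : Fin m) (h : (i : ℕ) + 1 = (j : ℕ)) :
    (PresentedGroup.of i : BraidGroup m) * PresentedGroup.of j * PresentedGroup.of i
      = PresentedGroup.of j * PresentedGroup.of i * PresentedGroup.of j := by
  have h1 := rel_eq_one (m := m) (Or.inr ⟨i, j, h, rfl⟩)
  simp only [map_mul, map_inv] at h1
  have h2 : (PresentedGroup.of i : BraidGroup m) * PresentedGroup.of j * PresentedGroup.of i *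
      (PresentedGroup.of j * PresentedGroup.of i * PresentedGroup.of j)⁻¹ = 1 := h1
  calc (PresentedGroup.of i : BraidGroup m) * PresentedGroup.of j * PresentedGroup.of i
      = ((PresentedGroup.of i : BraidGroup m) * PresentedGroup.of j * PresentedGroup.of i *
          (PresentedGroup.of j * PresentedGroup.of i * PresentedGroup.of j)⁻¹) *
          (PresentedGroup.of j * PresentedGroup.of i * PresentedGroup.of j) := by group
    _ = _ := by rw [h2]; group

theorem pconj {G : Type*} [Group G] (x y z : G)
    (h1 : x * y * x = y * x * y) (h2 : y * z * y = z * y * z) :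
    (y * x * z⁻¹ * y⁻¹) * z * (y * x * z⁻¹ * y⁻¹)⁻¹ = x := by
  have h2' : z⁻¹ * y⁻¹ * z * y * z = y := by
    calc z⁻¹ * y⁻¹ * z * y * z = z⁻¹ * y⁻¹ * (z * y * z) := by group
      _ = z⁻¹ * y⁻¹ * (y * z * y) := by rw [← h2]
      _ = y := by group
  calc (y * x * z⁻¹ * y⁻¹) * z * (y * x * z⁻¹ * y⁻¹)⁻¹
      = y * x * (z⁻¹ * y⁻¹ * z * y * z) * x⁻¹ * y⁻¹ := by group
    _ = y * x * y * x⁻¹ * y⁻¹ := by rw [h2']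
    _ = (x * y * x) * x⁻¹ * y⁻¹ := by rw [h1]
    _ = x := by group

theorem key {G : Type*} [Group G] (a b c d e : G)
    (hab : a * b * a = b * a * b) (hbc : b * c * b = c * b * c)
    (hcd : c * d * c = d * c * d) (hde : d * e * d = e * d * e)
    (hac : Commute a c) (had : Commute a d) (hae : Commute a e)
    (hbd : Commute b d) (hbe : Commute b e) (hce : Commute c e) :
    (d * c * b * a * e⁻¹ * d⁻¹ * c⁻¹ * b⁻¹) * c * (d * c * b * a * e⁻¹ * d⁻¹ * c⁻¹ * b⁻¹)⁻¹ = a ∧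
    (d * c * b * a * e⁻¹ * d⁻¹ * c⁻¹ * b⁻¹) * e * (d * c * b * a * e⁻¹ * d⁻¹ * c⁻¹ * b⁻¹)⁻¹ = c := by
  set p1 : G := b * a * c⁻¹ * b⁻¹ with hp1
  set p2 : G := d * c * e⁻¹ * d⁻¹ with hp2
  have hP1 : p1 * c * p1⁻¹ = a := pconj a b c hab hbc
  have hP2 : p2 * e * p2⁻¹ = c := pconj c d e hcd hde
  have hr : d * c * b * a * e⁻¹ * d⁻¹ * c⁻¹ * b⁻¹ = p2 * p1 := by
    rw [hp1, hp2]
    have h1 : b * a * e⁻¹ = e⁻¹ * (b * a) := (hbe.inv_right.mul_left hae.inv_right).eq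
    have h2 : b * a * d⁻¹ = d⁻¹ * (b * a) := (hbd.inv_right.mul_left had.inv_right).eq
    calc d * c * b * a * e⁻¹ * d⁻¹ * c⁻¹ * b⁻¹
        = d * c * (b * a * e⁻¹) * d⁻¹ * c⁻¹ * b⁻¹ := by group
      _ = d * c * (e⁻¹ * (b * a)) * d⁻¹ * c⁻¹ * b⁻¹ := by rw [h1]
      _ = d * c * e⁻¹ * (b * a * d⁻¹) * c⁻¹ * b⁻¹ := by group
      _ = d * c * e⁻¹ * (d⁻¹ * (b * a)) * c⁻¹ * b⁻¹ := by rw [h2]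
      _ = d * c * e⁻¹ * d⁻¹ * (b * a * c⁻¹ * b⁻¹) := by group
  have hap2 : Commute a p2 := ((had.mul_right hac).mul_right hae.inv_right).mul_right had.inv_right
  have hep1 : Commute e p1 :=
    ((hbe.symm.mul_right hae.symm).mul_right hce.symm.inv_right).mul_right hbe.symm.inv_right
  constructor
  · calc (d * c * b * a * e⁻¹ * d⁻¹ * c⁻¹ * b⁻¹) * c * (d * c * b * a * e⁻¹ * d⁻¹ * c⁻¹ * b⁻¹)⁻¹
        = (p2 * p1) * c * (p2 * p1)⁻¹ := by rw [hr]
      _ = p2 * (p1 * c * p1⁻¹) * p2⁻¹ := by group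
      _ = p2 * a * p2⁻¹ := by rw [hP1]
      _ = a * p2 * p2⁻¹ := by rw [hap2.symm.eq]
      _ = a := by group
  · calc (d * c * b * a * e⁻¹ * d⁻¹ * c⁻¹ * b⁻¹) * e * (d * c * b * a * e⁻¹ * d⁻¹ * c⁻¹ * b⁻¹)⁻¹
        = (p2 * p1) * e * (p2 * p1)⁻¹ := by rw [hr]
      _ = p2 * (p1 * e * p1⁻¹) * p2⁻¹ := by group
      _ = p2 * (e * p1 * p1⁻¹) * p2⁻¹ := by rw [hep1.symm.eq]
      _ = p2 * e * p2⁻¹ := by group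
      _ = c := hP2

theorem stmt10 (n : ℕ) (hn : 3 ≤ n) :
    (br2 : BraidGroup (2 * n - 1)) * bt 2 * br2⁻¹ = bt 1 ∧
    (br2 : BraidGroup (2 * n - 1)) * bt 3 * br2⁻¹ = bt 2 := by
  have hσ : ∀ (k : ℕ) (hk : k - 1 < 2 * n - 1),
      (bσ k : BraidGroup (2 * n - 1)) = PresentedGroup.of ⟨k - 1, hk⟩ := fun k hk => dif_pos hk
  have h1 : (1 : ℕ) - 1 < 2 * n - 1 := by omega
  have h2 : (2 : ℕ) - 1 < 2 * n - 1 := by omega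
  have h3 : (3 : ℕ) - 1 < 2 * n - 1 := by omega
  have h4 : (4 : ℕ) - 1 < 2 * n - 1 := by omega
  have h5 : (5 : ℕ) - 1 < 2 * n - 1 := by omega
  set a : BraidGroup (2 * n - 1) := PresentedGroup.of ⟨1 - 1, h1⟩ with ha
  set b : BraidGroup (2 * n - 1) := PresentedGroup.of ⟨2 - 1, h2⟩ with hb
  set c : BraidGroup (2 * n - 1) := PresentedGroup.of ⟨3 - 1, h3⟩ with hc
  set d : BraidGroup (2 * n - 1) := PresentedGroup.of ⟨4 - 1, h4⟩ with hd
  set e : BraidGroup (2 * n - 1) := PresentedGroup.of ⟨5 - 1, h5⟩ with he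
  have hab : a * b * a = b * a * b := braid_braid _ _ (by norm_num)
  have hbc : b * c * b = c * b * c := braid_braid _ _ (by norm_num)
  have hcd : c * d * c = d * c * d := braid_braid _ _ (by norm_num)
  have hde : d * e * d = e * d * e := braid_braid _ _ (by norm_num)
  have hac : Commute a c := braid_comm _ _ (by norm_num)
  have had : Commute a d := braid_comm _ _ (by norm_num)
  have hae : Commute a e := braid_comm _ _ (by norm_num)
  have hbd : Commute b d := braid_comm _ _ (by norm_num)
  have hbe : Commute b e := braid_comm _ _ (by norm_num)
  have hce : Commute c e := braid_comm _ _ (by norm_num)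
  have hkey := key a b c d e hab hbc hcd hde hac had hae hbd hbe hce
  have hbt1 : (bt 1 : BraidGroup (2 * n - 1)) = a := by
    rw [bt]; norm_num; rw [hσ 1 h1]
  have hbt2 : (bt 2 : BraidGroup (2 * n - 1)) = c := by
    rw [bt]; norm_num; rw [hσ 3 h3]
  have hbt3 : (bt 3 : BraidGroup (2 * n - 1)) = e := by
    rw [bt]; norm_num; rw [hσ 5 h5]
  have hbr2 : (br2 : BraidGroup (2 * n - 1)) = d * c * b * a * e⁻¹ * d⁻¹ * c⁻¹ * b⁻¹ := by
    rw [br2, hσ 1 h1, hσ 2 h2, hσ 3 h3, hσ 4 h4, hσ 5 h5]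
  rw [hbt1, hbt2, hbt3, hbr2]
  exact hkey
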